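/- Let g : ℝ → ℝ be convex and differentiable on all of ℝ, let X ~ N(0,1), assume E[|g(X)|·(X²+1)] < ∞, and let h : ℝ → ℝ be measurable such that for Lebesgue-almost every x ∈ ℝ, the derivative g′ is differentiable at x with derivative h(x). Then E[h(X)] ≤ E[X·g′(X)] = E[g(X)·(X²−1)], where E[h(X)] is well-defined in [0,∞] since h ≥ 0 almost everywhere (g′ being monotone increasing). -/

import Mathlib

/-!
Write `φ` for the standard Gaussian density and `c = g'(0)`. The function `F = φ · (x g + c)`
has derivative `φ · x (g' - c) - φ · (x² - 1) g`. The first term is nonnegative since `g'` is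
monotone, while `F` and the second term are integrable by the moment hypothesis. Comparing
`∫ₐᵇ F'` with the values of `F` along points `a → -∞`, `b → ∞` where `|F| < 1` shows that
`φ · x (g' - c)` is integrable, and then `∫ F' = 0` gives
`E[X (g'(X) - c)] = E[g(X)(X² - 1)]`; since `E[X] = 0`, the left side is `E[X g'(X)]`.

For the inequality, `φ(x) = ∫ φ(t) |t| dt` over the `t` such that `x` lies between `0` and `t`.
By Tonelli, `E[g''(X)] = ∫ φ(t) |t| (∫_{Ι 0 t} g'') dt`, and Lebesgue's bound
`∫_{Ι 0 t} g'' ≤ |g'(t) - g'(0)|` for the monotone `g'` turns this into `E[X (g'(X) - c)]`.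
-/

open MeasureTheory ProbabilityTheory Real Filter Set
open scoped ENNReal Interval Topology

local notation "φ" => gaussianPDFReal 0 1

lemma gaussianPDFReal_zero_one : φ = fun x => (√(2 * π))⁻¹ * exp (-x ^ 2 / 2) := by
  ext x; simp [gaussianPDFReal]

lemma hasDerivAt_gaussianPDFReal_zero_one (x : ℝ) : HasDerivAt φ (-(φ x * x)) x := by
  have h : HasDerivAt (fun y : ℝ => -y ^ 2 / 2) (-x) x :=
    ((hasDerivAt_pow 2 x).neg.div_const 2).congr_deriv (by norm_num; ring)
  rw [gaussianPDFReal_zero_one]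
  exact (h.exp.const_mul _).congr_deriv (by ring)

lemma continuous_gaussianPDFReal_zero_one : Continuous φ :=
  continuous_iff_continuousAt.2 fun x => (hasDerivAt_gaussianPDFReal_zero_one x).continuousAt

lemma integrable_gaussianReal_zero_one_iff {f : ℝ → ℝ} :
    Integrable f (gaussianReal 0 1) ↔ Integrable fun x => φ x * f x := by
  rw [gaussianReal_of_var_ne_zero 0 one_ne_zero, gaussianPDF_def,
    integrable_withDensity_iff (measurable_gaussianPDFReal 0 1).ennreal_ofReal
      (ae_of_all _ fun _ => ENNReal.ofReal_lt_top)]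
  simp_rw [ENNReal.toReal_ofReal (gaussianPDFReal_nonneg 0 1 _), mul_comm]

lemma integral_gaussianReal_zero_one (f : ℝ → ℝ) :
    ∫ x, f x ∂gaussianReal 0 1 = ∫ x, φ x * f x :=
  integral_gaussianReal_eq_integral_smul one_ne_zero

lemma lintegral_gaussianReal_zero_one {u : ℝ → ℝ≥0∞} (hu : Measurable u) :
    ∫⁻ x, u x ∂gaussianReal 0 1 = ∫⁻ x, ENNReal.ofReal (φ x) * u x := by
  rw [gaussianReal_of_var_ne_zero 0 one_ne_zero,
    lintegral_withDensity_eq_lintegral_mul _ (measurable_gaussianPDF 0 1) hu]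
  rfl

lemma integrable_gaussianPDFReal_mul_id : Integrable fun x => φ x * x :=
  integrable_gaussianReal_zero_one_iff.1 IsGaussian.integrable_id

lemma integrable_gaussianPDFReal_mul_abs : Integrable fun t => φ t * |t| :=
  integrable_gaussianPDFReal_mul_id.abs.congr
    (ae_of_all _ fun t => by simp [abs_mul, abs_of_nonneg (gaussianPDFReal_nonneg 0 1 t)])

lemma integral_Ioi_gaussianPDFReal_mul_abs {x : ℝ} (hx : 0 ≤ x) :
    ∫ t in Ioi x, φ t * |t| = φ x := by
  have hlim : Tendsto φ atTop (𝓝 0) :=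
    tendsto_zero_of_hasDerivAt_of_integrableOn_Ioi (a := 0)
      (fun t _ => hasDerivAt_gaussianPDFReal_zero_one t)
      integrable_gaussianPDFReal_mul_id.neg.integrableOn
      (integrable_gaussianPDFReal 0 1).integrableOn
  have h := integral_Ioi_of_hasDerivAt_of_tendsto (f := fun t => -φ t)
    (f' := fun t => φ t * |t|) (a := x)
    continuous_gaussianPDFReal_zero_one.neg.continuousWithinAt
    (fun t ht => (hasDerivAt_gaussianPDFReal_zero_one t).neg.congr_deriv
      (by rw [abs_of_pos (hx.trans_lt ht)]; ring))
    integrable_gaussianPDFReal_mul_abs.integrableOn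
    hlim.neg
  simpa using h

lemma integral_Iic_gaussianPDFReal_mul_abs {x : ℝ} (hx : x ≤ 0) :
    ∫ t in Iic x, φ t * |t| = φ x := by
  have hlim : Tendsto φ atBot (𝓝 0) :=
    tendsto_zero_of_hasDerivAt_of_integrableOn_Iic (a := 0)
      (fun t _ => hasDerivAt_gaussianPDFReal_zero_one t)
      integrable_gaussianPDFReal_mul_id.neg.integrableOn
      (integrable_gaussianPDFReal 0 1).integrableOn
  have h := integral_Iic_of_hasDerivAt_of_tendsto (f := φ)
    (f' := fun t => φ t * |t|) (a := x)
    continuous_gaussianPDFReal_zero_one.continuousWithinAt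
    (fun t ht => (hasDerivAt_gaussianPDFReal_zero_one t).congr_deriv
      (by rw [abs_of_neg (ht.trans_le hx)]; ring))
    integrable_gaussianPDFReal_mul_abs.integrableOn
    hlim
  simpa using h

lemma lintegral_setOf_mem_uIoc_gaussianPDFReal_mul_abs (x : ℝ) :
    ∫⁻ t in {t | x ∈ Ι 0 t}, ENNReal.ofReal (φ t * |t|) = ENNReal.ofReal (φ x) := by
  have hnn : 0 ≤ᵐ[volume] fun t => φ t * |t| :=
    ae_of_all _ fun t => mul_nonneg (gaussianPDFReal_nonneg 0 1 t) (abs_nonneg t)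
  rcases lt_or_ge 0 x with hx | hx
  · have hset : {t | x ∈ Ι 0 t} = Ici x := by
      ext t; simp only [mem_ofPred_eq, mem_uIoc, mem_Ici]; grind
    rw [hset, setLIntegral_congr Ioi_ae_eq_Ici.symm,
      ← ofReal_integral_eq_lintegral_ofReal integrable_gaussianPDFReal_mul_abs.integrableOn
        (ae_restrict_of_ae hnn), integral_Ioi_gaussianPDFReal_mul_abs hx.le]
  · have hset : {t | x ∈ Ι 0 t} = Iio x := by
      ext t; simp only [mem_ofPred_eq, mem_uIoc, mem_Iio]; grind
    rw [hset, setLIntegral_congr Iio_ae_eq_Iic,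
      ← ofReal_integral_eq_lintegral_ofReal integrable_gaussianPDFReal_mul_abs.integrableOn
        (ae_restrict_of_ae hnn), integral_Iic_gaussianPDFReal_mul_abs hx]

lemma lintegral_ofReal_gaussianPDFReal_mul {u : ℝ → ℝ≥0∞} (hu : Measurable u) :
    ∫⁻ x, ENNReal.ofReal (φ x) * u x =
      ∫⁻ t, ENNReal.ofReal (φ t * |t|) * ∫⁻ x in Ι 0 t, u x := by
  set S : Set (ℝ × ℝ) := {p | p.1 ∈ Ι 0 p.2}
  set K : ℝ × ℝ → ℝ≥0∞ := S.indicator fun p => ENNReal.ofReal (φ p.2 * |p.2|) * u p.1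
  have hS : MeasurableSet S := by
    simp only [S, uIoc, mem_Ioc]
    exact (measurableSet_lt (by fun_prop) measurable_fst).inter
      (measurableSet_le measurable_fst (by fun_prop))
  have hK : Measurable K := by
    refine Measurable.indicator ?_ hS
    have := continuous_gaussianPDFReal_zero_one.measurable
    fun_prop
  calc ∫⁻ x, ENNReal.ofReal (φ x) * u x = ∫⁻ x, ∫⁻ t, K (x, t) := by
        refine lintegral_congr fun x => ?_
        have hSx : MeasurableSet {t | x ∈ Ι 0 t} := hS.preimage measurable_prodMk_left
        rw [← lintegral_setOf_mem_uIoc_gaussianPDFReal_mul_abs x,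
          ← lintegral_mul_const _ (by fun_prop),
          ← lintegral_indicator hSx]
        rfl
    _ = ∫⁻ t, ∫⁻ x, K (x, t) := lintegral_lintegral_swap hK.aemeasurable
    _ = ∫⁻ t, ENNReal.ofReal (φ t * |t|) * ∫⁻ x in Ι 0 t, u x := by
        refine lintegral_congr fun t => ?_
        rw [← lintegral_const_mul _ hu, ← lintegral_indicator measurableSet_uIoc]
        rfl

lemma Monotone.lintegral_uIoc_deriv_le {f : ℝ → ℝ} (hf : Monotone f) (a b : ℝ) :
    ∫⁻ x in Ι a b, ENNReal.ofReal (deriv f x) ≤ ENNReal.ofReal |f b - f a| := by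
  have hint := (hf.monotoneOn (uIcc a b)).intervalIntegrable_deriv
  have hnn : 0 ≤ᵐ[volume.restrict (Ι a b)] deriv f := ae_of_all _ fun _ => hf.deriv_nonneg
  rw [← ofReal_integral_eq_lintegral_ofReal hint.def' hnn]
  refine ENNReal.ofReal_le_ofReal ?_
  calc ∫ x in Ι a b, deriv f x = ‖∫ x in a..b, deriv f x‖ := by
        rw [intervalIntegral.norm_integral_eq_norm_integral_uIoc,
          Real.norm_of_nonneg (integral_nonneg_of_ae hnn)]
    _ ≤ |f b - f a| := by
        simpa using abs_sub_left_of_mem_uIcc (hf.monotoneOn _).intervalIntegral_deriv_mem_uIcc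

lemma Monotone.mul_sub_apply_zero_nonneg {f : ℝ → ℝ} (hf : Monotone f) (x : ℝ) :
    0 ≤ x * (f x - f 0) := by
  simpa using (monotone_id.monovary hf).sub_mul_sub_nonneg 0 x

lemma Monotone.lintegral_ofReal_deriv_gaussianReal_le {f : ℝ → ℝ} (hf : Monotone f) :
    ∫⁻ x, ENNReal.ofReal (deriv f x) ∂gaussianReal 0 1 ≤
      ∫⁻ x, ENNReal.ofReal (x * (f x - f 0)) ∂gaussianReal 0 1 := by
  have hmeas := hf.measurable
  have hderiv := (measurable_deriv f).ennreal_ofReal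
  rw [lintegral_gaussianReal_zero_one hderiv, lintegral_gaussianReal_zero_one (by fun_prop),
    lintegral_ofReal_gaussianPDFReal_mul hderiv]
  calc _ ≤ ∫⁻ t, ENNReal.ofReal (φ t * |t|) * ENNReal.ofReal |f t - f 0| :=
        lintegral_mono fun t => by gcongr; exact hf.lintegral_uIoc_deriv_le 0 t
    _ = _ := lintegral_congr fun t => by
        rw [← ENNReal.ofReal_mul (mul_nonneg (gaussianPDFReal_nonneg 0 1 t) (abs_nonneg t)),
          mul_assoc, ← abs_mul, abs_of_nonneg (hf.mul_sub_apply_zero_nonneg t),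
          ENNReal.ofReal_mul (gaussianPDFReal_nonneg 0 1 t)]

lemma MeasureTheory.Integrable.exists_mem_norm_lt {α E : Type*} [MeasurableSpace α]
    [NormedAddCommGroup E] {μ : Measure α} {F : α → E} (hF : Integrable F μ) {s : Set α}
    (hs : μ s = ∞) {ε : ℝ} (hε : 0 < ε) :
    ∃ x ∈ s, ‖F x‖ < ε := by
  by_contra! h
  exact (measure_mono h).trans_lt (hF.measure_norm_ge_lt_top hε) |>.ne hs

lemma MeasureTheory.Integrable.exists_seq_tendsto_atTop_norm_lt {E : Type*}
    [NormedAddCommGroup E] {F : ℝ → E} (hF : Integrable F) {ε : ℝ} (hε : 0 < ε) :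
    ∃ b : ℕ → ℝ, Tendsto b atTop atTop ∧ ∀ n, ‖F (b n)‖ < ε :=
  exists_seq_forall_of_frequently <| frequently_atTop.2 fun _ =>
    hF.exists_mem_norm_lt volume_Ici hε

lemma MeasureTheory.Integrable.exists_seq_tendsto_atBot_norm_lt {E : Type*}
    [NormedAddCommGroup E] {F : ℝ → E} (hF : Integrable F) {ε : ℝ} (hε : 0 < ε) :
    ∃ a : ℕ → ℝ, Tendsto a atTop atBot ∧ ∀ n, ‖F (a n)‖ < ε :=
  exists_seq_forall_of_frequently <| frequently_atBot.2 fun _ =>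
    hF.exists_mem_norm_lt volume_Iic hε

section DerivSub

variable {F f r : ℝ → ℝ}

lemma integrable_of_hasDerivAt_sub_of_nonneg (hF : ∀ x, HasDerivAt F (f x - r x) x)
    (hf : 0 ≤ f) (hfi : ∀ a b, IntervalIntegrable f volume a b) (hr : Integrable r)
    (hFi : Integrable F) : Integrable f := by
  obtain ⟨a, ha, haF⟩ := hFi.exists_seq_tendsto_atBot_norm_lt one_pos
  obtain ⟨b, hb, hbF⟩ := hFi.exists_seq_tendsto_atTop_norm_lt one_pos
  refine integrable_of_intervalIntegral_norm_bounded (2 + ∫ x, |r x|) (fun n => (hfi _ _).1)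
    ha hb ?_
  filter_upwards [ha.eventually (eventually_le_atBot 0), hb.eventually (eventually_ge_atTop 0)]
    with n han hbn
  have hab : a n ≤ b n := han.trans hbn
  have hftc : ∫ x in a n..b n, (f x - r x) = F (b n) - F (a n) :=
    intervalIntegral.integral_eq_sub_of_hasDerivAt (fun x _ => hF x)
      ((hfi _ _).sub hr.intervalIntegrable)
  have hr_le : ∫ x in a n..b n, r x ≤ ∫ x, |r x| := by
    rw [intervalIntegral.integral_of_le hab]
    exact (le_abs_self _).trans <| (abs_integral_le_integral_abs).trans <|
      setIntegral_le_integral hr.abs (ae_of_all _ fun _ => abs_nonneg _)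
  calc ∫ x in a n..b n, ‖f x‖
      = (∫ x in a n..b n, (f x - r x)) + ∫ x in a n..b n, r x := by
        rw [intervalIntegral.integral_sub (hfi _ _) hr.intervalIntegrable, sub_add_cancel]
        exact intervalIntegral.integral_congr fun x _ => Real.norm_of_nonneg (hf x)
    _ ≤ 2 + ∫ x, |r x| := by
        rw [hftc]
        linarith [le_abs_self (F (b n)), neg_abs_le (F (a n)), (haF n).le, (hbF n).le,
          Real.norm_eq_abs (F (a n)), Real.norm_eq_abs (F (b n))]

lemma integral_eq_of_hasDerivAt_sub_of_nonneg (hF : ∀ x, HasDerivAt F (f x - r x) x)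
    (hf : 0 ≤ f) (hfi : ∀ a b, IntervalIntegrable f volume a b) (hr : Integrable r)
    (hFi : Integrable F) : ∫ x, f x = ∫ x, r x := by
  have hfint := integrable_of_hasDerivAt_sub_of_nonneg hF hf hfi hr hFi
  have := integral_eq_zero_of_hasDerivAt_of_integrable hF (hfint.sub hr) hFi
  rwa [integral_sub hfint hr, sub_eq_zero] at this

end DerivSub

lemma integrable_mul_sub_and_integral_eq_gaussianReal {g g' : ℝ → ℝ}
    (hg : ∀ x, HasDerivAt g (g' x) x) (hmono : Monotone g')
    (hint : Integrable (fun x => |g x| * (x ^ 2 + 1)) (gaussianReal 0 1)) :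
    Integrable (fun x => x * (g' x - g' 0)) (gaussianReal 0 1) ∧
      ∫ x, x * (g' x - g' 0) ∂gaussianReal 0 1 =
        ∫ x, g x * (x ^ 2 - 1) ∂gaussianReal 0 1 := by
  have hgc : Continuous g := continuous_iff_continuousAt.2 fun x => (hg x).continuousAt
  have hF : ∀ x, HasDerivAt (fun x => φ x * (x * g x + g' 0))
      (φ x * (x * (g' x - g' 0)) - φ x * (g x * (x ^ 2 - 1))) x := fun x =>
    ((hasDerivAt_gaussianPDFReal_zero_one x).mul
      (((hasDerivAt_id' x).mul (hg x)).add_const _)).congr_deriv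
        (by simp only [Pi.mul_apply]; ring)
  have hf : 0 ≤ fun x => φ x * (x * (g' x - g' 0)) := fun x =>
    mul_nonneg (gaussianPDFReal_nonneg 0 1 x) (hmono.mul_sub_apply_zero_nonneg x)
  have hfi (a b : ℝ) : IntervalIntegrable (fun x => φ x * (x * (g' x - g' 0))) volume a b :=
    ((hmono.intervalIntegrable.sub intervalIntegrable_const).continuousOn_mul
      continuousOn_id).continuousOn_mul continuous_gaussianPDFReal_zero_one.continuousOn
  have hr : Integrable (fun x => g x * (x ^ 2 - 1)) (gaussianReal 0 1) := by
    refine hint.mono' (by fun_prop) (ae_of_all _ fun x => ?_)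
    rw [Real.norm_eq_abs, abs_mul]
    gcongr
    rw [abs_le]; constructor <;> nlinarith [sq_nonneg x]
  have hFi : Integrable (fun x => x * g x + g' 0) (gaussianReal 0 1) := by
    refine (hint.add (integrable_const |g' 0|)).mono' (by fun_prop) (ae_of_all _ fun x => ?_)
    rw [Real.norm_eq_abs]
    refine (abs_add_le _ _).trans (add_le_add_left ?_ _)
    rw [abs_mul, mul_comm]
    exact mul_le_mul_of_nonneg_left (by nlinarith [abs_nonneg x, sq_abs x]) (abs_nonneg _)
  rw [integrable_gaussianReal_zero_one_iff] at hr hFi ⊢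
  rw [integral_gaussianReal_zero_one, integral_gaussianReal_zero_one]
  exact ⟨integrable_of_hasDerivAt_sub_of_nonneg hF hf hfi hr hFi,
    integral_eq_of_hasDerivAt_sub_of_nonneg hF hf hfi hr hFi⟩

lemma integral_mul_sub_apply_zero_gaussianReal {f : ℝ → ℝ}
    (hf : Integrable (fun x => x * (f x - f 0)) (gaussianReal 0 1)) :
    ∫ x, x * f x ∂gaussianReal 0 1 = ∫ x, x * (f x - f 0) ∂gaussianReal 0 1 := by
  have hid : Integrable (fun x => f 0 * x) (gaussianReal 0 1) :=
    IsGaussian.integrable_id.const_mul (f 0)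
  calc ∫ x, x * f x ∂gaussianReal 0 1
      = ∫ x, (x * (f x - f 0) + f 0 * x) ∂gaussianReal 0 1 := by congr 1; ext x; ring
    _ = ∫ x, x * (f x - f 0) ∂gaussianReal 0 1 := by
      rw [integral_add hf hid, integral_const_mul, integral_id_gaussianReal, mul_zero, add_zero]

theorem stmt_10_general (g g' h : ℝ → ℝ)
    (hconv : ConvexOn ℝ Set.univ g)
    (hg' : ∀ x, HasDerivAt g (g' x) x)
    (hderiv : ∀ᵐ x ∂(volume : Measure ℝ), HasDerivAt g' (h x) x)
    (hint : Integrable (fun x => |g x| * (x ^ 2 + 1)) (gaussianReal 0 1)) :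
    ((∫⁻ x, ENNReal.ofReal (h x) ∂gaussianReal 0 1) ≤
        ENNReal.ofReal (∫ x, x * g' x ∂gaussianReal 0 1)) ∧
      (∫ x, x * g' x ∂gaussianReal 0 1) = ∫ x, g x * (x ^ 2 - 1) ∂gaussianReal 0 1 := by
  have hmono : Monotone g' := by
    have := hconv.monotoneOn_deriv fun x _ => (hg' x).differentiableAt
    rwa [monotoneOn_univ, funext fun x => (hg' x).deriv] at this
  obtain ⟨hint', hstein⟩ := integrable_mul_sub_and_integral_eq_gaussianReal hg' hmono hint
  have hmean := integral_mul_sub_apply_zero_gaussianReal hint'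
  refine ⟨?_, hmean.trans hstein⟩
  calc ∫⁻ x, ENNReal.ofReal (h x) ∂gaussianReal 0 1
      = ∫⁻ x, ENNReal.ofReal (deriv g' x) ∂gaussianReal 0 1 :=
        lintegral_congr_ae <| (gaussianReal_absolutelyContinuous 0 one_ne_zero).ae_le <|
          hderiv.mono fun x hx => by simp only [hx.deriv]
    _ ≤ ∫⁻ x, ENNReal.ofReal (x * (g' x - g' 0)) ∂gaussianReal 0 1 :=
        hmono.lintegral_ofReal_deriv_gaussianReal_le
    _ = ENNReal.ofReal (∫ x, x * g' x ∂gaussianReal 0 1) := by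
        rw [hmean, ofReal_integral_eq_lintegral_ofReal hint'
          (ae_of_all _ hmono.mul_sub_apply_zero_nonneg)]

/-- Second-order Stein's lemma: if `g : ℝ → ℝ` is convex and everywhere differentiable
with derivative `g'`, `X ~ N(0,1)`, `E[|g(X)|(X²+1)] < ∞`, and `h` is a measurable
a.e. derivative of `g'`, then `E[h(X)] ≤ E[X g'(X)] = E[g(X)(X²−1)]`, the first
expectation being well-defined in `[0,∞]`. -/
theorem stmt_10 (g g' h : ℝ → ℝ)
    (hconv : ConvexOn ℝ Set.univ g)
    (hg' : ∀ x, HasDerivAt g (g' x) x)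
    (hmeas : Measurable h)
    (hderiv : ∀ᵐ x ∂(volume : Measure ℝ), HasDerivAt g' (h x) x)
    (hint : Integrable (fun x => |g x| * (x ^ 2 + 1)) (gaussianReal 0 1)) :
    ((∫⁻ x, ENNReal.ofReal (h x) ∂gaussianReal 0 1) ≤
        ENNReal.ofReal (∫ x, x * g' x ∂gaussianReal 0 1)) ∧
      (∫ x, x * g' x ∂gaussianReal 0 1) = ∫ x, g x * (x ^ 2 - 1) ∂gaussianReal 0 1 :=
  stmt_10_general g g' h hconv hg' hderiv hint
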